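/- arXiv:2504.11141 — 2 statements merged into one kernel-verified Lean document; each statement's English description precedes it below -/
import Mathlib

section
/- Suppose the cost function c satisfies Assumption A. Then min{ c((s,p),y) : s ∈ B, y ∈ Y } tends to +∞ as p → +∞; that is, for every M > 0 there exists P > 0 such that c((s,p),y) ≥ M for all s ∈ B, all y ∈ Y, and all p ≥ P. -/
/-! For each height `t ≥ 0` the map `(s, y) ↦ c((s,t),y)` is continuous on the compact set
`B × Y` (local Lipschitz continuity), and it increases with `t` and diverges pointwise. Hence the
open sets `{(s, y) : c((s,t),y) > M}` form a directed open cover of `B × Y`, so one height `T`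
already works for all `(s, y)`, and by monotonicity so does every `p ≥ T`. -/

open MeasureTheory Set Filter Topology

noncomputable section

/-- The ambient source space `ℝ^{d-1} × ℝ` (with `n = d - 1`). -/
abbrev ESrc (n : ℕ) := EuclideanSpace ℝ (Fin n) × ℝ

/-- The ambient target space `ℝ^d` (with `n = d - 1`). -/
abbrev ETgt (n : ℕ) := EuclideanSpace ℝ (Fin (n + 1))

/-- Assumption A on the cost function `c : X × Y → [0,∞)`, where `X = B × [0,∞)`:
(nonnegativity,) local Lipschitz continuity, strict monotonicity and unboundedness in the
vertical variable, and equicontinuity in the horizontal variable. -/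
structure AssumptionA {n : ℕ} (B : Set (EuclideanSpace ℝ (Fin n))) (Y : Set (ETgt n))
    (c : ESrc n → ETgt n → ℝ) : Prop where
  nonneg : ∀ x ∈ B ×ˢ Ici (0:ℝ), ∀ y ∈ Y, 0 ≤ c x y
  locLip : ∀ z ∈ (B ×ˢ Ici (0:ℝ)) ×ˢ Y, ∃ ε > 0, ∃ K : NNReal,
    LipschitzOnWith K (fun q : ESrc n × ETgt n => c q.1 q.2)
      (((B ×ˢ Ici (0:ℝ)) ×ˢ Y) ∩ Metric.ball z ε)
  strictMonoOn : ∀ s ∈ B, ∀ y ∈ Y, StrictMonoOn (fun t : ℝ => c (s, t) y) (Ici (0:ℝ))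
  unbounded : ∀ s ∈ B, ∀ y ∈ Y, ∀ M : ℝ, ∃ t : ℝ, 0 ≤ t ∧ M ≤ c (s, t) y
  equicontinuous : EquicontinuousOn
    (fun i : ↥(Ici (0:ℝ)) × ↥Y => fun s : EuclideanSpace ℝ (Fin n) =>
      c (s, (i.1 : ℝ)) (i.2 : ETgt n)) B

/-- A probability density on `B` (an element of `P_ac(B)`, identified with its density). -/
structure IsDensity {n : ℕ} (B : Set (EuclideanSpace ℝ (Fin n)))
    (ρ : EuclideanSpace ℝ (Fin n) → ℝ) : Prop where
  measurable : Measurable ρ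
  nonneg : ∀ s, 0 ≤ ρ s
  zero_outside : ∀ s ∉ B, ρ s = 0
  integral_one : ∫ s, ρ s = 1

/-- The region `X_{p̄} = {(s,t) : s ∈ B, 0 ≤ t ≤ p̄(s)}` under the graph of `ρ`. -/
def subgraph {n : ℕ} (B : Set (EuclideanSpace ℝ (Fin n)))
    (ρ : EuclideanSpace ℝ (Fin n) → ℝ) : Set (ESrc n) :=
  {x : ESrc n | x.1 ∈ B ∧ 0 ≤ x.2 ∧ x.2 ≤ ρ x.1}

/-- The measure `μ_{p̄}`: Lebesgue measure restricted to `X_{p̄}`. -/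
def muOf {n : ℕ} (B : Set (EuclideanSpace ℝ (Fin n)))
    (ρ : EuclideanSpace ℝ (Fin n) → ℝ) : Measure (ESrc n) :=
  volume.restrict (subgraph B ρ)

/-- `γ` is a coupling (transport plan) between `μ` and `ν`. -/
def IsCoupling {α β : Type*} [MeasurableSpace α] [MeasurableSpace β]
    (μ : Measure α) (ν : Measure β) (γ : Measure (α × β)) : Prop :=
  γ.map Prod.fst = μ ∧ γ.map Prod.snd = ν

/-- The optimal transport (Kantorovich) cost `T_c(μ,ν)`. -/
def transportCost {α β : Type*} [MeasurableSpace α] [MeasurableSpace β]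
    (c : α → β → ℝ) (μ : Measure α) (ν : Measure β) : ℝ :=
  sInf {r : ℝ | ∃ γ : Measure (α × β), IsCoupling μ ν γ ∧ r = ∫ z, c z.1 z.2 ∂γ}

/-- `γ` is an optimal transport plan from `μ` to `ν` for the cost `c`. -/
def IsOptimalPlan {α β : Type*} [MeasurableSpace α] [MeasurableSpace β]
    (c : α → β → ℝ) (μ : Measure α) (ν : Measure β) (γ : Measure (α × β)) : Prop :=
  IsCoupling μ ν γ ∧ ∀ γ' : Measure (α × β), IsCoupling μ ν γ' →
    ∫ z, c z.1 z.2 ∂γ ≤ ∫ z, c z.1 z.2 ∂γ'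

/-- `T` is an optimal transport map from `μ` to `ν` for the cost `c`. -/
def IsOptimalMap {α β : Type*} [MeasurableSpace α] [MeasurableSpace β]
    (c : α → β → ℝ) (μ : Measure α) (ν : Measure β) (T : α → β) : Prop :=
  Measurable T ∧ μ.map T = ν ∧ ∀ T' : α → β, Measurable T' → μ.map T' = ν →
    ∫ x, c x (T x) ∂μ ≤ ∫ x, c x (T' x) ∂μ

/-- The `c`-transform `ψ^c(x) = min_{y ∈ Y} (c(x,y) - ψ(y))`. -/
def ctransform {α β : Type*} (c : α → β → ℝ) (Y : Set β) (ψ : β → ℝ) (x : α) : ℝ :=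
  sInf ((fun y => c x y - ψ y) '' Y)

/-- The Kantorovich dual functional `K(ψ; μ, ν) = ∫ ψ^c dμ + ∫ ψ dν`. -/
def Kfun {α β : Type*} [MeasurableSpace α] [MeasurableSpace β]
    (c : α → β → ℝ) (Y : Set β) (ψ : β → ℝ) (μ : Measure α) (ν : Measure β) : ℝ :=
  ∫ x, ctransform c Y ψ x ∂μ + ∫ y, ψ y ∂ν

/-- `ψ` is a Kantorovich potential from `μ` to `ν`: a continuous maximiser of the
Kantorovich dual functional over `C(Y)`. -/
def IsKantorovichPotential {α β : Type*} [MeasurableSpace α] [MeasurableSpace β]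
    [TopologicalSpace β] (c : α → β → ℝ) (Y : Set β) (ψ : β → ℝ) (μ : Measure α) (ν : Measure β) : Prop :=
  ContinuousOn ψ Y ∧ ∀ φ : β → ℝ, ContinuousOn φ Y → Kfun c Y φ μ ν ≤ Kfun c Y ψ μ ν

/-- The primal functional `F_ν(p̄) = T_c(μ_{p̄}, ν)`. -/
def Fprimal {n : ℕ} (c : ESrc n → ETgt n → ℝ) (B : Set (EuclideanSpace ℝ (Fin n)))
    (ν : Measure (ETgt n)) (ρ : EuclideanSpace ℝ (Fin n) → ℝ) : ℝ :=
  transportCost c (muOf B ρ) ν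

/-- The dual functional `G_ν(ψ) = inf_{p̄ ∈ P_ac(B)} K(ψ; μ_{p̄}, ν)`. -/
def Gdual {n : ℕ} (c : ESrc n → ETgt n → ℝ) (B : Set (EuclideanSpace ℝ (Fin n)))
    (Y : Set (ETgt n)) (ν : Measure (ETgt n)) (ψ : ETgt n → ℝ) : ℝ :=
  sInf {r : ℝ | ∃ ρ, IsDensity B ρ ∧ r = Kfun c Y ψ (muOf B ρ) ν}

/-- `q(s,y,σ) = max {0, inf {t ≥ 0 : c((s,t),y) ≥ σ}}`, the generalized inverse of
`t ↦ c((s,t),y)`. -/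
def qfun {n : ℕ} (c : ESrc n → ETgt n → ℝ) (s : EuclideanSpace ℝ (Fin n))
    (y : ETgt n) (σ : ℝ) : ℝ :=
  max 0 (sInf {t : ℝ | 0 ≤ t ∧ σ ≤ c (s, t) y})

/-- The candidate optimal surface `p̄_ψ(s) = max_{y ∈ Y} q(s, y, ψ(y) + τ)`. -/
def pbar {n : ℕ} (c : ESrc n → ETgt n → ℝ) (Y : Set (ETgt n)) (ψ : ETgt n → ℝ)
    (τ : ℝ) (s : EuclideanSpace ℝ (Fin n)) : ℝ :=
  sSup ((fun y => qfun c s y (ψ y + τ)) '' Y)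

theorem IsCompact.exists_forall_lt_of_monotone {X ι : Type*} [TopologicalSpace X] [Preorder ι]
    [IsDirected ι (· ≤ ·)] [Nonempty ι] {K : Set X} (hK : IsCompact K) {f : ι → X → ℝ}
    (hcont : ∀ i, ContinuousOn (f i) K) (hmono : ∀ x ∈ K, Monotone (f · x))
    (hunbdd : ∀ x ∈ K, ∀ M, ∃ i, M < f i x) (M : ℝ) : ∃ i, ∀ x ∈ K, M < f i x := by
  have : CompactSpace K := isCompact_iff_compactSpace.mp hK
  let U : ι → Set K := fun i => {x | M < f i x}
  have hUopen (i : ι) : IsOpen (U i) :=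
    isOpen_lt continuous_const (hcont i).domRestrict
  have hUcover : univ ⊆ ⋃ i, U i := fun x _ => mem_iUnion.mpr (hunbdd x x.2 M)
  have hUmono : Monotone U := fun i j hij x (hx : M < f i x) => hx.trans_le (hmono x x.2 hij)
  obtain ⟨i, hi⟩ := isCompact_univ.elim_directed_cover U hUopen hUcover hUmono.directed_le
  exact ⟨i, fun x hx => hi (mem_univ (⟨x, hx⟩ : K))⟩

namespace AssumptionA

variable {n : ℕ} {B : Set (EuclideanSpace ℝ (Fin n))} {Y : Set (ETgt n)}
  {c : ESrc n → ETgt n → ℝ}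

theorem locallyLipschitzOn (hc : AssumptionA B Y c) :
    LocallyLipschitzOn ((B ×ˢ Ici (0 : ℝ)) ×ˢ Y) (fun q : ESrc n × ETgt n => c q.1 q.2) := by
  intro z hz
  obtain ⟨ε, hε, K, hK⟩ := hc.locLip z hz
  exact ⟨K, _, inter_mem_nhdsWithin _ (Metric.ball_mem_nhds z hε), hK⟩

theorem continuousOn_height (hc : AssumptionA B Y c) {t : ℝ} (ht : 0 ≤ t) :
    ContinuousOn (fun z : EuclideanSpace ℝ (Fin n) × ETgt n => c (z.1, t) z.2) (B ×ˢ Y) :=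
  hc.locallyLipschitzOn.continuousOn.comp
    (f := fun z : EuclideanSpace ℝ (Fin n) × ETgt n => ((z.1, t), z.2)) (by fun_prop)
    fun _ hz => ⟨⟨hz.1, ht⟩, hz.2⟩

theorem monotone_height (hc : AssumptionA B Y c) {s : EuclideanSpace ℝ (Fin n)} (hs : s ∈ B)
    {y : ETgt n} (hy : y ∈ Y) : Monotone (fun t : NNReal => c (s, t) y) :=
  fun a b hab => (hc.strictMonoOn s hs y hy).monotoneOn a.2 b.2 hab

theorem exists_forall_lt (hc : AssumptionA B Y c) (hB : IsCompact B) (hY : IsCompact Y)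
    (M : ℝ) : ∃ T : NNReal, ∀ s ∈ B, ∀ y ∈ Y, M < c (s, T) y := by
  obtain ⟨T, hT⟩ := (hB.prod hY).exists_forall_lt_of_monotone
    (f := fun (t : NNReal) z => c (z.1, t) z.2) (fun t => hc.continuousOn_height t.2)
    (fun z hz => hc.monotone_height hz.1 hz.2)
    (fun z hz M => by
      obtain ⟨t, ht, hMt⟩ := hc.unbounded z.1 hz.1 z.2 hz.2 (M + 1)
      exact ⟨t.toNNReal, by simp only [Real.coe_toNNReal t ht]; linarith⟩) M
  exact ⟨T, fun s hs y hy => hT (s, y) ⟨hs, hy⟩⟩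

end AssumptionA

theorem cost_min_tendsto_atTop_general
    (n : ℕ)
    (B : Set (EuclideanSpace ℝ (Fin n))) (hBc : IsCompact B)
    (Y : Set (ETgt n)) (hYc : IsCompact Y)
    (c : ESrc n → ETgt n → ℝ) (hc : AssumptionA B Y c) :
    ∀ M : ℝ, 0 < M → ∃ P : ℝ, 0 < P ∧ ∀ s ∈ B, ∀ y ∈ Y, ∀ p : ℝ, P ≤ p → M ≤ c (s, p) y := by
  intro M _
  obtain ⟨T, hT⟩ := hc.exists_forall_lt hBc hYc M
  refine ⟨T + 1, by positivity, fun s hs y hy p hp => ?_⟩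
  have hTp : (T : ℝ) ≤ p := by linarith
  calc M ≤ c (s, T) y := (hT s hs y hy).le
    _ ≤ c (s, p) y := (hc.strictMonoOn s hs y hy).monotoneOn T.2 (T.2.trans hTp) hTp

/-- Under Assumption A, `min {c((s,p),y) : s ∈ B, y ∈ Y} → +∞` as `p → +∞`:
for every `M > 0` there exists `P > 0` such that `c((s,p),y) ≥ M` for all `s ∈ B`, `y ∈ Y`
and `p ≥ P`. -/
theorem cost_min_tendsto_atTop
    (n : ℕ) (hn : 1 ≤ n)
    (B : Set (EuclideanSpace ℝ (Fin n))) (hBc : IsCompact B) (hBint : (interior B).Nonempty)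
    (Y : Set (ETgt n)) (hYc : IsCompact Y) (hYne : Y.Nonempty)
    (c : ESrc n → ETgt n → ℝ) (hc : AssumptionA B Y c) :
    ∀ M : ℝ, 0 < M → ∃ P : ℝ, 0 < P ∧ ∀ s ∈ B, ∀ y ∈ Y, ∀ p : ℝ, P ≤ p → M ≤ c (s, p) y :=
  cost_min_tendsto_atTop_general n B hBc Y hYc c hc
end
end

section
/- Suppose the cost function c satisfies Assumption A. Then for each ψ ∈ C(Y) there exists a unique constant τ_ψ ∈ ℝ such that the function p̄_ψ : B → [0,∞) defined by p̄_ψ(s) := max_{y∈Y} q(s, y, ψ(y) + τ_ψ) is a probability density on B (i.e. ∫_B p̄_ψ(s) ds = 1). Moreover, the set S := { p̄_ψ : ψ ∈ C(Y) } of continuous functions on B is uniformly bounded and equicontinuous. -/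
/-!
Assumption A makes `c` jointly continuous, and `q(s, y, σ)`, the generalized inverse of the
strictly increasing map `t ↦ c((s,t),y)`, is then jointly continuous in `(s, y, σ)`, because
`T < q ↔ c((s,T),y) < σ` and `q < T ↔ σ < c((s,T),y)` are open conditions. Uniform continuity
of `q` on compact sets gives a single modulus of continuity of `p̄_ψ(s) = max_y q(s, y, ψ(y) + τ)`
in `(s, τ)`, valid for every `ψ` with `ψ + τ` bounded above by a fixed constant.

Hence `τ ↦ ∫_B p̄` is continuous; it vanishes for `τ ≤ -max ψ` and exceeds `1` for large `τ`
since `|B| > 0`, so the intermediate value theorem produces `τ_ψ`. It is unique because `p̄`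
increases strictly in `τ` wherever it is positive (the maximum over `Y` is attained). Finally,
`∫_B p̄ = 1` forces `p̄ ≤ 1/|B|` at a minimum point of `p̄`, which bounds `ψ + τ` above by
`max c(·, 1/|B|, ·)`; this one constant yields both the uniform bound and the equicontinuity.
-/

open MeasureTheory Set Filter Topology

noncomputable section

-- `qfun c s y` is definitionally `lowerInv (fun t => c (s, t) y)`.
def lowerInv (f : ℝ → ℝ) (σ : ℝ) : ℝ :=
  max 0 (sInf {t : ℝ | 0 ≤ t ∧ σ ≤ f t})

section lowerInv

variable {f : ℝ → ℝ} {σ T : ℝ}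

lemma lowerInv_nonneg : 0 ≤ lowerInv f σ := le_max_left _ _

lemma lowerInv_le_iff (hf : ContinuousOn f (Ici 0)) (hmono : MonotoneOn f (Ici 0))
    (hσ : ∃ t, 0 ≤ t ∧ σ ≤ f t) (hT : 0 ≤ T) : lowerInv f σ ≤ T ↔ σ ≤ f T := by
  set S := {t : ℝ | 0 ≤ t ∧ σ ≤ f t}
  have hbdd : BddBelow S := ⟨0, fun _ ht => ht.1⟩
  have hinf : lowerInv f σ = sInf S := max_eq_right (le_csInf hσ fun _ ht => ht.1)
  have hclosed : IsClosed S := hf.preimage_isClosed_of_isClosed isClosed_Ici isClosed_Ici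
  rw [hinf]
  constructor
  · intro h
    have hmem : sInf S ∈ S := hclosed.csInf_mem hσ hbdd
    exact hmem.2.trans (hmono hmem.1 hT h)
  · exact fun h => csInf_le hbdd ⟨hT, h⟩

lemma lowerInv_lt_iff (hf : ContinuousOn f (Ici 0)) (hmono : StrictMonoOn f (Ici 0))
    (hσ : ∃ t, 0 ≤ t ∧ σ ≤ f t) (hT : 0 < T) : lowerInv f σ < T ↔ σ < f T := by
  have hle {t : ℝ} (ht : 0 ≤ t) := lowerInv_le_iff hf hmono.monotoneOn hσ ht
  constructor
  · intro h
    exact ((hle lowerInv_nonneg).1 le_rfl).trans_lt (hmono lowerInv_nonneg hT.le h)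
  · intro h
    by_contra! hTq
    -- below `T` the value `σ` is not reached, so by continuity `f T ≤ σ`
    have hsub : Ico 0 T ⊆ Ici 0 ∩ f ⁻¹' Iic σ := fun t ht =>
      ⟨ht.1, le_of_not_ge fun h' => ((hle ht.1).2 h').not_gt (ht.2.trans_le hTq)⟩
    have hclosed := hf.preimage_isClosed_of_isClosed isClosed_Ici (isClosed_Iic (a := σ))
    have hTmem := hclosed.closure_subset_iff.2 hsub
      (by rw [closure_Ico hT.ne]; exact ⟨hT.le, le_rfl⟩)
    exact h.not_ge hTmem.2

end lowerInv

lemma qfun_nonneg {n : ℕ} {c : ESrc n → ETgt n → ℝ} {s : EuclideanSpace ℝ (Fin n)}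
    {y : ETgt n} {σ : ℝ} : 0 ≤ qfun c s y σ :=
  lowerInv_nonneg

lemma pbar_nonneg {n : ℕ} {c : ESrc n → ETgt n → ℝ} {Y : Set (ETgt n)} {ψ : ETgt n → ℝ}
    {τ : ℝ} {s : EuclideanSpace ℝ (Fin n)} : 0 ≤ pbar c Y ψ τ s :=
  Real.sSup_nonneg (by rintro _ ⟨y, -, rfl⟩; exact qfun_nonneg)

namespace AssumptionA

variable {n : ℕ} {B : Set (EuclideanSpace ℝ (Fin n))} {Y : Set (ETgt n)}
  {c : ESrc n → ETgt n → ℝ} {s : EuclideanSpace ℝ (Fin n)} {y : ETgt n}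
  {ψ : ETgt n → ℝ} {σ σ' τ τ' T : ℝ}

lemma continuousOn (hc : AssumptionA B Y c) :
    ContinuousOn (fun z : ESrc n × ETgt n => c z.1 z.2) ((B ×ˢ Ici 0) ×ˢ Y) := by
  intro z hz
  obtain ⟨ε, hε, K, hK⟩ := hc.locLip z hz
  exact (continuousWithinAt_inter (Metric.ball_mem_nhds z hε)).1
    (hK.continuousOn.continuousWithinAt ⟨hz, Metric.mem_ball_self hε⟩)

lemma continuousOn_vertical (hc : AssumptionA B Y c) (hs : s ∈ B) (hy : y ∈ Y) :
    ContinuousOn (fun t => c (s, t) y) (Ici 0) :=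
  hc.continuousOn.comp (f := fun t : ℝ => (((s, t) : ESrc n), y)) (by fun_prop)
    fun _ ht => ⟨⟨hs, ht⟩, hy⟩

lemma continuousOn_horizontal (hc : AssumptionA B Y c) (hT : 0 ≤ T) :
    ContinuousOn (fun p : EuclideanSpace ℝ (Fin n) × ETgt n => c (p.1, T) p.2) (B ×ˢ Y) :=
  hc.continuousOn.comp
    (f := fun p : EuclideanSpace ℝ (Fin n) × ETgt n => (((p.1, T) : ESrc n), p.2)) (by fun_prop)
    fun _ hp => ⟨⟨hp.1, hT⟩, hp.2⟩

lemma qfun_le_iff (hc : AssumptionA B Y c) (hs : s ∈ B) (hy : y ∈ Y) (hT : 0 ≤ T) :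
    qfun c s y σ ≤ T ↔ σ ≤ c (s, T) y :=
  lowerInv_le_iff (hc.continuousOn_vertical hs hy) (hc.strictMonoOn s hs y hy).monotoneOn
    (hc.unbounded s hs y hy σ) hT

lemma qfun_lt_iff (hc : AssumptionA B Y c) (hs : s ∈ B) (hy : y ∈ Y) (hT : 0 < T) :
    qfun c s y σ < T ↔ σ < c (s, T) y :=
  lowerInv_lt_iff (hc.continuousOn_vertical hs hy) (hc.strictMonoOn s hs y hy)
    (hc.unbounded s hs y hy σ) hT

lemma lt_qfun_iff (hc : AssumptionA B Y c) (hs : s ∈ B) (hy : y ∈ Y) (hT : 0 ≤ T) :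
    T < qfun c s y σ ↔ c (s, T) y < σ := by
  simpa only [not_le] using (hc.qfun_le_iff hs hy hT).not

lemma le_qfun_of_le (hc : AssumptionA B Y c) (hs : s ∈ B) (hy : y ∈ Y) (hT : 0 < T)
    (h : c (s, T) y ≤ σ) : T ≤ qfun c s y σ := by
  simpa only [not_lt] using (hc.qfun_lt_iff hs hy hT).not.2 h.not_gt

lemma qfun_eq_zero (hc : AssumptionA B Y c) (hs : s ∈ B) (hy : y ∈ Y) (hσ : σ ≤ 0) :
    qfun c s y σ = 0 :=
  le_antisymm
    ((hc.qfun_le_iff hs hy le_rfl).2 (hσ.trans (hc.nonneg (s, 0) ⟨hs, le_refl (0:ℝ)⟩ y hy)))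
    qfun_nonneg

lemma qfun_max_zero (hc : AssumptionA B Y c) (hs : s ∈ B) (hy : y ∈ Y) :
    qfun c s y (max σ 0) = qfun c s y σ := by
  rcases le_total σ 0 with hσ | hσ
  · rw [max_eq_right hσ, hc.qfun_eq_zero hs hy le_rfl, hc.qfun_eq_zero hs hy hσ]
  · rw [max_eq_left hσ]

lemma qfun_mono (hc : AssumptionA B Y c) (hs : s ∈ B) (hy : y ∈ Y) : Monotone (qfun c s y) :=
  fun _ _ h => (hc.qfun_le_iff hs hy qfun_nonneg).2
    (h.trans ((hc.qfun_le_iff hs hy qfun_nonneg).1 le_rfl))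

lemma qfun_lt_qfun (hc : AssumptionA B Y c) (hs : s ∈ B) (hy : y ∈ Y)
    (hq : 0 < qfun c s y σ) (h : σ < σ') : qfun c s y σ < qfun c s y σ' :=
  (hc.lt_qfun_iff hs hy qfun_nonneg).2
    ((not_lt.1 ((hc.qfun_lt_iff hs hy hq).not.1 (lt_irrefl _))).trans_lt h)

lemma continuousOn_qfun (hc : AssumptionA B Y c) :
    ContinuousOn (fun p : EuclideanSpace ℝ (Fin n) × ETgt n × ℝ => qfun c p.1 p.2.1 p.2.2)
      (B ×ˢ Y ×ˢ univ) := by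
  rintro ⟨s₀, y₀, σ₀⟩ ⟨hs₀, hy₀, -⟩
  have hgap {T : ℝ} (hT : 0 ≤ T) : ContinuousWithinAt
      (fun p : EuclideanSpace ℝ (Fin n) × ETgt n × ℝ => p.2.2 - c (p.1, T) p.2.1)
      (B ×ˢ Y ×ˢ univ) (s₀, y₀, σ₀) := by
    refine continuousWithinAt_snd.snd.sub ?_
    exact (hc.continuousOn_horizontal hT).comp
      (f := fun p : EuclideanSpace ℝ (Fin n) × ETgt n × ℝ => (p.1, p.2.1)) (by fun_prop)
      (fun _ hp => ⟨hp.1, hp.2.1⟩) _ ⟨hs₀, hy₀, trivial⟩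
  have hmem : ∀ᶠ p in 𝓝[B ×ˢ Y ×ˢ univ] (s₀, y₀, σ₀), p ∈ B ×ˢ Y ×ˢ univ :=
    self_mem_nhdsWithin
  refine tendsto_order.2 ⟨fun a ha => ?_, fun a ha => ?_⟩
  · rcases lt_or_ge a 0 with ha0 | ha0
    · exact Eventually.of_forall fun _ => ha0.trans_le qfun_nonneg
    have h0 : 0 < σ₀ - c (s₀, a) y₀ := sub_pos.2 ((hc.lt_qfun_iff hs₀ hy₀ ha0).1 ha)
    filter_upwards [(hgap ha0).eventually (lt_mem_nhds h0), hmem] with p hp hpB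
    exact (hc.lt_qfun_iff hpB.1 hpB.2.1 ha0).2 (sub_pos.1 hp)
  · have ha0 : 0 < a := qfun_nonneg.trans_lt ha
    have h0 : σ₀ - c (s₀, a) y₀ < 0 := sub_neg.2 ((hc.qfun_lt_iff hs₀ hy₀ ha0).1 ha)
    filter_upwards [(hgap ha0.le).eventually (gt_mem_nhds h0), hmem] with p hp hpB
    exact (hc.qfun_lt_iff hpB.1 hpB.2.1 ha0).2 (sub_neg.1 hp)

lemma exists_qfun_le (hc : AssumptionA B Y c) (hBc : IsCompact B) (hYc : IsCompact Y)
    (C : ℝ) : ∃ M, ∀ s ∈ B, ∀ y ∈ Y, ∀ σ ≤ C, qfun c s y σ ≤ M := by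
  have hcont : ContinuousOn (fun p : EuclideanSpace ℝ (Fin n) × ETgt n => qfun c p.1 p.2 C)
      (B ×ˢ Y) :=
    hc.continuousOn_qfun.comp
      (f := fun p : EuclideanSpace ℝ (Fin n) × ETgt n => (p.1, p.2, C)) (by fun_prop)
      fun _ hp => ⟨hp.1, hp.2, trivial⟩
  obtain ⟨M, hM⟩ := (hBc.prod hYc).bddAbove_image hcont
  exact ⟨M, fun s hs y hy σ hσ =>
    (hc.qfun_mono hs hy hσ).trans (hM (mem_image_of_mem _ (mk_mem_prod hs hy)))⟩

lemma exists_dist_qfun_lt (hc : AssumptionA B Y c) (hBc : IsCompact B) (hYc : IsCompact Y)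
    (C : ℝ) {ε : ℝ} (hε : 0 < ε) : ∃ δ > 0, ∀ s ∈ B, ∀ s' ∈ B, ∀ y ∈ Y, ∀ σ ≤ C, ∀ σ' ≤ C,
      dist s s' < δ → dist σ σ' < δ → dist (qfun c s y σ) (qfun c s' y σ') < ε := by
  have hK : IsCompact (B ×ˢ Y ×ˢ Icc 0 (max C 0)) := hBc.prod (hYc.prod isCompact_Icc)
  obtain ⟨δ, hδ, hδε⟩ := Metric.uniformContinuousOn_iff.1
    (hK.uniformContinuousOn_of_continuous (hc.continuousOn_qfun.mono
      (prod_mono_right (prod_mono_right (subset_univ _))))) ε hε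
  refine ⟨δ, hδ, fun s hs s' hs' y hy σ hσ σ' hσ' hss hσσ => ?_⟩
  -- only `max σ 0 ∈ [0, max C 0]` matters, since `q` vanishes for `σ ≤ 0`
  rw [← hc.qfun_max_zero hs hy, ← hc.qfun_max_zero hs' hy]
  refine hδε (s, y, max σ 0) ⟨hs, hy, le_max_right _ _, max_le_max_right 0 hσ⟩
    (s', y, max σ' 0) ⟨hs', hy, le_max_right _ _, max_le_max_right 0 hσ'⟩ ?_
  have hmax : dist (max σ 0) (max σ' 0) < δ :=
    (abs_max_sub_max_le_abs σ σ' 0).trans_lt hσσ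
  simpa [Prod.dist_eq, hss, hδ] using hmax

lemma continuousOn_qfun_section (hc : AssumptionA B Y c) (hs : s ∈ B) (hψ : ContinuousOn ψ Y) :
    ContinuousOn (fun y => qfun c s y (ψ y + τ)) Y :=
  hc.continuousOn_qfun.comp (f := fun y => (s, y, ψ y + τ))
    (continuousOn_const.prodMk (continuousOn_id.prodMk (hψ.add continuousOn_const)))
    fun _ hy => ⟨hs, hy, trivial⟩

lemma qfun_le_pbar (hc : AssumptionA B Y c) (hYc : IsCompact Y) (hs : s ∈ B)
    (hψ : ContinuousOn ψ Y) (hy : y ∈ Y) : qfun c s y (ψ y + τ) ≤ pbar c Y ψ τ s :=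
  le_csSup (hYc.bddAbove_image (hc.continuousOn_qfun_section hs hψ)) (mem_image_of_mem _ hy)

lemma exists_qfun_eq_pbar (hc : AssumptionA B Y c) (hYc : IsCompact Y) (hYne : Y.Nonempty)
    (hs : s ∈ B) (hψ : ContinuousOn ψ Y) : ∃ y ∈ Y, qfun c s y (ψ y + τ) = pbar c Y ψ τ s :=
  (hYc.image_of_continuousOn (hc.continuousOn_qfun_section hs hψ)).sSup_mem (hYne.image _)

lemma pbar_le_pbar (hc : AssumptionA B Y c) (hYc : IsCompact Y) (hYne : Y.Nonempty)
    (hs : s ∈ B) (hψ : ContinuousOn ψ Y) (h : τ ≤ τ') : pbar c Y ψ τ s ≤ pbar c Y ψ τ' s := by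
  obtain ⟨y, hy, hq⟩ := hc.exists_qfun_eq_pbar hYc hYne hs hψ (τ := τ)
  exact hq ▸ (hc.qfun_mono hs hy (by linarith)).trans (hc.qfun_le_pbar hYc hs hψ hy)

lemma pbar_lt_pbar (hc : AssumptionA B Y c) (hYc : IsCompact Y) (hYne : Y.Nonempty)
    (hs : s ∈ B) (hψ : ContinuousOn ψ Y) (h : τ < τ') (hpos : 0 < pbar c Y ψ τ s) :
    pbar c Y ψ τ s < pbar c Y ψ τ' s := by
  obtain ⟨y, hy, hq⟩ := hc.exists_qfun_eq_pbar hYc hYne hs hψ (τ := τ)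
  rw [← hq] at hpos ⊢
  exact (hc.qfun_lt_qfun hs hy hpos (by linarith)).trans_le (hc.qfun_le_pbar hYc hs hψ hy)

lemma exists_dist_pbar_lt (hc : AssumptionA B Y c) (hBc : IsCompact B) (hYc : IsCompact Y)
    (hYne : Y.Nonempty) (C : ℝ) {ε : ℝ} (hε : 0 < ε) :
    ∃ δ > 0, ∀ ψ : ETgt n → ℝ, ContinuousOn ψ Y → ∀ τ τ' : ℝ,
      (∀ y ∈ Y, ψ y + τ ≤ C) → (∀ y ∈ Y, ψ y + τ' ≤ C) →
      ∀ s ∈ B, ∀ s' ∈ B, dist s s' < δ → dist τ τ' < δ →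
        dist (pbar c Y ψ τ s) (pbar c Y ψ τ' s') < ε := by
  obtain ⟨δ, hδ, hδε⟩ := hc.exists_dist_qfun_lt hBc hYc C (half_pos hε)
  refine ⟨δ, hδ, fun ψ hψ τ τ' hτ hτ' s hs s' hs' hss hττ => ?_⟩
  have hle {τ τ' s s'} (hτ : ∀ y ∈ Y, ψ y + τ ≤ C) (hτ' : ∀ y ∈ Y, ψ y + τ' ≤ C)
      (hs : s ∈ B) (hs' : s' ∈ B) (hss : dist s s' < δ) (hττ : dist τ τ' < δ) :
      pbar c Y ψ τ s ≤ pbar c Y ψ τ' s' + ε / 2 := by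
    obtain ⟨y, hy, hq⟩ := hc.exists_qfun_eq_pbar hYc hYne hs hψ (τ := τ)
    have hclose := hδε s hs s' hs' y hy _ (hτ y hy) _ (hτ' y hy) hss
      (by rwa [dist_add_left])
    rw [← hq]
    linarith [(abs_lt.1 (Real.dist_eq _ _ ▸ hclose)).2, hc.qfun_le_pbar hYc hs' hψ hy (τ := τ')]
  rw [Real.dist_eq, abs_lt]
  constructor
  · linarith [hle hτ' hτ hs' hs (dist_comm s s' ▸ hss) (dist_comm τ τ' ▸ hττ)]
  · linarith [hle hτ hτ' hs hs' hss hττ]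

lemma exists_apply_le (hc : AssumptionA B Y c) (hBc : IsCompact B) (hYc : IsCompact Y)
    (hT : 0 ≤ T) : ∃ K, ∀ s ∈ B, ∀ y ∈ Y, c (s, T) y ≤ K := by
  obtain ⟨K, hK⟩ := (hBc.prod hYc).bddAbove_image (hc.continuousOn_horizontal hT)
  exact ⟨K, fun s hs y hy => hK (mem_image_of_mem _ (mk_mem_prod hs hy))⟩

lemma continuousOn_pbar (hc : AssumptionA B Y c) (hBc : IsCompact B) (hYc : IsCompact Y)
    (hYne : Y.Nonempty) (hψ : ContinuousOn ψ Y) : ContinuousOn (pbar c Y ψ τ) B := by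
  obtain ⟨C, hC⟩ := hYc.bddAbove_image hψ
  have hτ : ∀ y ∈ Y, ψ y + τ ≤ C + τ := fun y hy => by linarith [hC (mem_image_of_mem ψ hy)]
  refine Metric.continuousOn_iff.2 fun s₀ hs₀ ε hε => ?_
  obtain ⟨δ, hδ, hδε⟩ := hc.exists_dist_pbar_lt hBc hYc hYne (C + τ) hε
  exact ⟨δ, hδ, fun s hs hss => hδε ψ hψ τ τ hτ hτ s hs s₀ hs₀ hss (by rwa [dist_self])⟩

lemma integrableOn_pbar (hc : AssumptionA B Y c) (hBc : IsCompact B) (hYc : IsCompact Y)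
    (hYne : Y.Nonempty) (hψ : ContinuousOn ψ Y) : IntegrableOn (pbar c Y ψ τ) B :=
  (hc.continuousOn_pbar hBc hYc hYne hψ).integrableOn_compact hBc

lemma continuous_integral_pbar (hc : AssumptionA B Y c) (hBc : IsCompact B) (hYc : IsCompact Y)
    (hYne : Y.Nonempty) (hψ : ContinuousOn ψ Y) :
    Continuous fun τ => ∫ s in B, pbar c Y ψ τ s := by
  obtain ⟨C, hC⟩ := hYc.bddAbove_image hψ
  refine Metric.continuous_iff.2 fun τ₀ ε hε => ?_
  set v := volume.real B
  have hv : 0 ≤ v := measureReal_nonneg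
  obtain ⟨δ, hδ, hδε⟩ := hc.exists_dist_pbar_lt hBc hYc hYne (C + τ₀ + 1)
    (div_pos hε (by positivity : 0 < v + 1))
  refine ⟨min δ 1, by positivity, fun τ hτ => ?_⟩
  have hbound {τ : ℝ} (h : τ ≤ τ₀ + 1) : ∀ y ∈ Y, ψ y + τ ≤ C + τ₀ + 1 :=
    fun y hy => by linarith [hC (mem_image_of_mem ψ hy)]
  have hττ₀ : dist τ τ₀ < δ := hτ.trans_le (min_le_left _ _)
  have hτ₀ : τ ≤ τ₀ + 1 := by
    linarith [(abs_lt.1 (Real.dist_eq τ τ₀ ▸ hτ.trans_le (min_le_right _ _))).2]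
  rw [dist_eq_norm, ← integral_sub (hc.integrableOn_pbar hBc hYc hYne hψ)
    (hc.integrableOn_pbar hBc hYc hYne hψ)]
  calc ‖∫ s in B, (pbar c Y ψ τ s - pbar c Y ψ τ₀ s)‖ ≤ ε / (v + 1) * v :=
        norm_setIntegral_le_of_norm_le_const hBc.measure_lt_top fun s hs =>
          (hδε ψ hψ τ τ₀ (hbound hτ₀) (hbound (le_add_of_nonneg_right zero_le_one)) s hs s hs
            (by rwa [dist_self]) hττ₀).le
    _ < ε := by
        rw [div_mul_eq_mul_div, div_lt_iff₀ (by positivity)]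
        nlinarith

lemma integral_pbar_eq_zero (hc : AssumptionA B Y c) (hτ : ∀ y ∈ Y, ψ y + τ ≤ 0) :
    ∫ s in B, pbar c Y ψ τ s = 0 :=
  setIntegral_eq_zero_of_forall_eq_zero fun s hs => le_antisymm
    (Real.sSup_le (by rintro _ ⟨y, hy, rfl⟩; exact (hc.qfun_eq_zero hs hy (hτ y hy)).le) le_rfl)
    pbar_nonneg

lemma exists_one_le_integral_pbar (hc : AssumptionA B Y c) (hBc : IsCompact B)
    (hYc : IsCompact Y) (hYne : Y.Nonempty) (hvol : 0 < volume B) (hψ : ContinuousOn ψ Y) :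
    ∃ τ, 1 ≤ ∫ s in B, pbar c Y ψ τ s := by
  obtain ⟨y₀, hy₀⟩ := hYne
  set v := volume.real B
  have hv : 0 < v := ENNReal.toReal_pos hvol.ne' hBc.measure_lt_top.ne
  obtain ⟨K, hK⟩ := hc.exists_apply_le hBc hYc (T := 1 / v) (by positivity)
  -- at level `K - ψ y₀`, already `q(s, y₀, ·) ≥ 1 / v` on all of `B`
  refine ⟨K - ψ y₀, ?_⟩
  have hle : ∀ s ∈ B, 1 / v ≤ pbar c Y ψ (K - ψ y₀) s := fun s hs =>
    (hc.le_qfun_of_le hs hy₀ (by positivity) (by linarith [hK s hs y₀ hy₀])).trans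
      (hc.qfun_le_pbar hYc hs hψ hy₀)
  calc 1 = v * (1 / v) := by field_simp
    _ = ∫ _ in B, 1 / v := by rw [setIntegral_const, smul_eq_mul]
    _ ≤ ∫ s in B, pbar c Y ψ (K - ψ y₀) s :=
        setIntegral_mono_on (integrableOn_const hBc.measure_lt_top.ne)
          (hc.integrableOn_pbar hBc hYc ⟨y₀, hy₀⟩ hψ) hBc.measurableSet hle

lemma integral_pbar_lt_integral_pbar (hc : AssumptionA B Y c) (hBc : IsCompact B)
    (hYc : IsCompact Y) (hYne : Y.Nonempty) (hψ : ContinuousOn ψ Y) (h : τ < τ')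
    (hpos : 0 < ∫ s in B, pbar c Y ψ τ s) :
    ∫ s in B, pbar c Y ψ τ s < ∫ s in B, pbar c Y ψ τ' s := by
  have hi := hc.integrableOn_pbar hBc hYc hYne hψ (τ := τ)
  have hi' := hc.integrableOn_pbar hBc hYc hYne hψ (τ := τ')
  have hsupp : 0 < volume.restrict B (Function.support (pbar c Y ψ τ)) :=
    (integral_pos_iff_support_of_nonneg_ae (ae_of_all _ fun _ => pbar_nonneg) hi).1 hpos
  have hsub : Function.support (pbar c Y ψ τ) ≤ᵐ[volume.restrict B]
      Function.support fun s => pbar c Y ψ τ' s - pbar c Y ψ τ s := by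
    filter_upwards [ae_restrict_mem hBc.measurableSet] with s hs hne
    exact (sub_pos.2 (hc.pbar_lt_pbar hYc hYne hs hψ h (pbar_nonneg.lt_of_ne' hne))).ne'
  have hdiff : 0 < ∫ s in B, (pbar c Y ψ τ' s - pbar c Y ψ τ s) :=
    (integral_pos_iff_support_of_nonneg_ae ((ae_restrict_iff' hBc.measurableSet).2
      (ae_of_all _ fun s hs => sub_nonneg.2 (hc.pbar_le_pbar hYc hYne hs hψ h.le)))
      (hi'.sub hi)).2 (hsupp.trans_le (measure_mono_ae hsub))
  rw [integral_sub hi' hi] at hdiff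
  linarith

lemma existsUnique_integral_pbar_eq_one (hc : AssumptionA B Y c) (hBc : IsCompact B)
    (hYc : IsCompact Y) (hYne : Y.Nonempty) (hvol : 0 < volume B) (hψ : ContinuousOn ψ Y) :
    ∃! τ, ∫ s in B, pbar c Y ψ τ s = 1 := by
  obtain ⟨C, hC⟩ := hYc.bddAbove_image hψ
  obtain ⟨τ₁, hτ₁⟩ := hc.exists_one_le_integral_pbar hBc hYc hYne hvol hψ
  have hτ₀ : ∫ s in B, pbar c Y ψ (min τ₁ (-C)) s = 0 := hc.integral_pbar_eq_zero fun y hy => by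
    linarith [hC (mem_image_of_mem ψ hy), min_le_right τ₁ (-C)]
  obtain ⟨τ, -, hτ : ∫ s in B, pbar c Y ψ τ s = 1⟩ := intermediate_value_Icc (min_le_left τ₁ (-C))
    (hc.continuous_integral_pbar hBc hYc hYne hψ).continuousOn ⟨hτ₀ ▸ zero_le_one, hτ₁⟩
  refine ⟨τ, hτ, fun τ' (hτ' : ∫ s in B, pbar c Y ψ τ' s = 1) => ?_⟩
  have hlt {τ τ'} (h : τ < τ') (h1 : ∫ s in B, pbar c Y ψ τ s = 1) :
      ∫ s in B, pbar c Y ψ τ s < ∫ s in B, pbar c Y ψ τ' s :=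
    hc.integral_pbar_lt_integral_pbar hBc hYc hYne hψ h (h1 ▸ one_pos)
  rcases lt_trichotomy τ' τ with h | h | h
  · exact absurd (hτ'.trans hτ.symm) (hlt h hτ').ne
  · exact h
  · exact absurd (hτ.trans hτ'.symm) (hlt h hτ).ne

lemma exists_le_of_integral_pbar_eq_one (hc : AssumptionA B Y c) (hBc : IsCompact B)
    (hYc : IsCompact Y) (hYne : Y.Nonempty) (hvol : 0 < volume B) :
    ∃ C, ∀ ψ τ, ContinuousOn ψ Y → ∫ s in B, pbar c Y ψ τ s = 1 → ∀ y ∈ Y, ψ y + τ ≤ C := by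
  set v := volume.real B
  have hv : 0 < v := ENNReal.toReal_pos hvol.ne' hBc.measure_lt_top.ne
  obtain ⟨K, hK⟩ := hc.exists_apply_le hBc hYc (T := 1 / v) (by positivity)
  refine ⟨K, fun ψ τ hψ h1 y hy => ?_⟩
  -- at a minimum point `s₁` of `p̄`, the mean value bound gives `p̄(s₁) ≤ 1 / v`
  obtain ⟨s₁, hs₁, hmin⟩ := hBc.exists_isMinOn (nonempty_of_measure_ne_zero hvol.ne')
    (hc.continuousOn_pbar hBc hYc hYne hψ (τ := τ))
  have hmean : v * pbar c Y ψ τ s₁ ≤ 1 :=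
    calc v * pbar c Y ψ τ s₁ = ∫ _ in B, pbar c Y ψ τ s₁ := by rw [setIntegral_const, smul_eq_mul]
      _ ≤ ∫ s in B, pbar c Y ψ τ s :=
          setIntegral_mono_on (integrableOn_const hBc.measure_lt_top.ne)
            (hc.integrableOn_pbar hBc hYc hYne hψ) hBc.measurableSet (isMinOn_iff.1 hmin)
      _ = 1 := h1
  have hq : qfun c s₁ y (ψ y + τ) ≤ 1 / v :=
    (hc.qfun_le_pbar hYc hs₁ hψ hy).trans (by rw [le_div_iff₀ hv]; linarith)
  exact ((hc.qfun_le_iff hs₁ hy (by positivity)).1 hq).trans (hK s₁ hs₁ y hy)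

end AssumptionA

theorem pbar_exists_unique_tau_and_S_uniformly_bounded_equicontinuous_general
    (n : ℕ)
    (B : Set (EuclideanSpace ℝ (Fin n))) (hBc : IsCompact B) (hBint : (interior B).Nonempty)
    (Y : Set (ETgt n)) (hYc : IsCompact Y) (hYne : Y.Nonempty)
    (c : ESrc n → ETgt n → ℝ) (hc : AssumptionA B Y c) :
    (∀ ψ : ETgt n → ℝ, ContinuousOn ψ Y →
      ∃! τ : ℝ, ∫ s in B, pbar c Y ψ τ s = 1) ∧
    (∃ M : ℝ, ∀ (ψ : ETgt n → ℝ) (τ : ℝ), ContinuousOn ψ Y →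
      (∫ s in B, pbar c Y ψ τ s = 1) → ∀ s ∈ B, pbar c Y ψ τ s ≤ M) ∧
    EquicontinuousOn
      (fun ψτ : {p : (ETgt n → ℝ) × ℝ //
          ContinuousOn p.1 Y ∧ ∫ s in B, pbar c Y p.1 p.2 s = 1} =>
        pbar c Y ψτ.1.1 ψτ.1.2) B := by
  have hvol : 0 < volume B :=
    (isOpen_interior.measure_pos volume hBint).trans_le (measure_mono interior_subset)
  obtain ⟨C, hC⟩ := hc.exists_le_of_integral_pbar_eq_one hBc hYc hYne hvol
  obtain ⟨M, hM⟩ := hc.exists_qfun_le hBc hYc C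
  refine ⟨fun ψ hψ => hc.existsUnique_integral_pbar_eq_one hBc hYc hYne hvol hψ,
    ⟨M, fun ψ τ hψ h1 s hs => ?_⟩, fun s₀ hs₀ U hU => ?_⟩
  · obtain ⟨y, hy, hq⟩ := hc.exists_qfun_eq_pbar hYc hYne hs hψ (τ := τ)
    exact hq ▸ hM s hs y hy _ (hC ψ τ hψ h1 y hy)
  · obtain ⟨ε, hε, hεU⟩ := Metric.mem_uniformity_dist.1 hU
    obtain ⟨δ, hδ, hδε⟩ := hc.exists_dist_pbar_lt hBc hYc hYne C hε
    filter_upwards [inter_mem_nhdsWithin B (Metric.ball_mem_nhds s₀ hδ)]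
      with s ⟨hs, hsδ⟩ ⟨⟨ψ, τ⟩, hψ, h1⟩
    exact hεU (hδε ψ hψ τ τ (hC ψ τ hψ h1) (hC ψ τ hψ h1) s₀ hs₀ s hs
      (by rwa [dist_comm]) (by rwa [dist_self]))

/-- Under Assumption A, for each `ψ ∈ C(Y)` there is a unique constant `τ_ψ`
such that `p̄_ψ(s) = max_{y∈Y} q(s, y, ψ(y) + τ_ψ)` is a probability density on `B`; moreover
the set `S = {p̄_ψ : ψ ∈ C(Y)}` is uniformly bounded and equicontinuous. -/
theorem pbar_exists_unique_tau_and_S_uniformly_bounded_equicontinuous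
    (n : ℕ) (hn : 1 ≤ n)
    (B : Set (EuclideanSpace ℝ (Fin n))) (hBc : IsCompact B) (hBint : (interior B).Nonempty)
    (Y : Set (ETgt n)) (hYc : IsCompact Y) (hYne : Y.Nonempty)
    (c : ESrc n → ETgt n → ℝ) (hc : AssumptionA B Y c) :
    (∀ ψ : ETgt n → ℝ, ContinuousOn ψ Y →
      ∃! τ : ℝ, ∫ s in B, pbar c Y ψ τ s = 1) ∧
    (∃ M : ℝ, ∀ (ψ : ETgt n → ℝ) (τ : ℝ), ContinuousOn ψ Y →
      (∫ s in B, pbar c Y ψ τ s = 1) → ∀ s ∈ B, pbar c Y ψ τ s ≤ M) ∧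
    EquicontinuousOn
      (fun ψτ : {p : (ETgt n → ℝ) × ℝ //
          ContinuousOn p.1 Y ∧ ∫ s in B, pbar c Y p.1 p.2 s = 1} =>
        pbar c Y ψτ.1.1 ψτ.1.2) B :=
  pbar_exists_unique_tau_and_S_uniformly_bounded_equicontinuous_general n B hBc hBint Y hYc hYne c
    hc
end
end
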